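/- Base case of Lemma A.2 (k₁ = 0): for nonnegative integers k_2,...,k_{m+1} with K = ∑_{i=2}^{m+1} k_i treated as a variable bound, one has K^{[m]} + ∑_{∅≠I⊆{2,...,m+1}} K(I)^{[|I|−1]}·(K−K(I))^{[m−|I|]} = (K+1)^{[m]}, where K(I)=∑_{i∈I}k_i. -/

import Mathlib

/-!
Count the empty set as a term of the sum (it contributes `K^{[m]}`). The subsets containing a
fixed index `j` then contribute the multivariate Vandermonde sum
`∑_{J ⊆ M∖{j}} (k_j + K(J))^{[|J|]} (K - k_j - K(J))^{[m-1-|J|]}`, and this does not depend on the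
shift `k_j`: by `Δ x^{[r]} = r x^{[r-1]}`, raising the shift by one changes it by a sum of
differences of Vandermonde sums over smaller index sets, which vanish by induction. So the weights
can be set to zero one at a time, and for zero weights only `|I| ≤ 1` contributes, leaving
`K^{[m]} + m K^{[m-1]} = (K+1)^{[m]}`.
-/

open Finset

/-- Falling factorial power `x^{[p]} = x(x-1)⋯(x-p+1)` for an integer `x`. -/
def fall (x : ℤ) (p : ℕ) : ℤ := ∏ i ∈ Finset.range p, (x - i)

lemma fall_zero (x : ℤ) : fall x 0 = 1 := by
  simp [fall]

lemma fall_succ (x : ℤ) (p : ℕ) : fall x (p + 1) = fall x p * (x - p) := by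
  simp [fall, prod_range_succ]

lemma fall_succ_left (x : ℤ) (p : ℕ) : fall x (p + 1) = x * fall (x - 1) p := by
  simp only [fall, prod_range_succ', Nat.cast_add, Nat.cast_one, Nat.cast_zero, sub_zero]
  rw [mul_comm]
  exact congrArg (x * ·) (prod_congr rfl fun i _ => by ring)

lemma fall_zero_left_succ (p : ℕ) : fall 0 (p + 1) = 0 := by
  rw [fall_succ_left, zero_mul]

lemma fall_add_one_sub (x : ℤ) (r : ℕ) : fall (x + 1) r - fall x r = r * fall x (r - 1) := by
  cases r with
  | zero => simp [fall_zero]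
  | succ p =>
    rw [fall_succ_left, add_sub_cancel_right, fall_succ, Nat.add_sub_cancel]
    push_cast
    ring

lemma eq_of_periodic_one {β : Type*} {f : ℤ → β} (hf : Function.Periodic f 1) (a b : ℤ) :
    f a = f b := by
  simpa using (hf.int_mul_eq a).trans (hf.int_mul_eq b).symm

variable {α : Type*}

lemma sum_sum_powerset_erase [DecidableEq α] (s : Finset α) (F : Finset α → ℤ) :
    ∑ i ∈ s, ∑ J ∈ (s.erase i).powerset, F J = ∑ I ∈ s.powerset, (s.card - I.card) • F I := by
  rw [sum_comm' (t' := s.powerset) (s' := fun I => s \ I)]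
  · exact sum_congr rfl fun I hI => by
      rw [sum_const, card_sdiff_of_subset (mem_powerset.mp hI)]
  · intro i J
    simp only [mem_powerset, subset_erase, mem_sdiff]
    tauto

lemma sum_sum_powerset_erase_insert [DecidableEq α] (s : Finset α) (F : Finset α → ℤ) :
    ∑ i ∈ s, ∑ J ∈ (s.erase i).powerset, F (insert i J) = ∑ I ∈ s.powerset, I.card • F I := by
  have h : ∀ i ∈ s, ∑ J ∈ (s.erase i).powerset, F (insert i J)
      = ∑ I ∈ s.powerset with i ∈ I, F I := fun i hi => by
    refine sum_nbij' (insert i) (·.erase i) ?_ ?_ ?_ ?_ (fun _ _ => rfl)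
    · intro J hJ
      simp_all [insert_subset_iff, subset_erase]
    · intro I hI
      simp_all [erase_subset_erase]
    · intro J hJ
      simp_all [subset_erase]
    · intro I hI
      simp_all
  rw [sum_congr rfl h, sum_comm' (t' := s.powerset) (s' := id)]
  · simp
  · intro i I
    simp only [mem_filter, mem_powerset, id]
    exact ⟨fun h => ⟨h.2.2, h.2.1⟩, fun h => ⟨h.2 h.1, h.2, h.1⟩⟩

/-- For zero weights this is `∑ⱼ (n choose j) c^{[j]} (y-c)^{[n-j]}`, the left side of Vandermonde's
identity for falling factorials. -/
def vandermondeSum (s : Finset α) (k : α → ℤ) (y c : ℤ) : ℤ :=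
  ∑ I ∈ s.powerset, fall (c + ∑ i ∈ I, k i) I.card * fall (y - c - ∑ i ∈ I, k i) (s.card - I.card)

lemma vandermondeSum_congr {s : Finset α} {k k' : α → ℤ} (h : ∀ i ∈ s, k i = k' i) (y c : ℤ) :
    vandermondeSum s k y c = vandermondeSum s k' y c :=
  sum_congr rfl fun I hI => by
    rw [sum_congr rfl fun i hi => h i (mem_powerset.mp hI hi)]

lemma sum_vandermondeSum_erase_add_weight [DecidableEq α] (s : Finset α) (k : α → ℤ) (y c : ℤ) :
    ∑ i ∈ s, vandermondeSum (s.erase i) k y (c + k i)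
      = ∑ I ∈ s.powerset, I.card • (fall (c + ∑ i ∈ I, k i) (I.card - 1)
          * fall (y - c - ∑ i ∈ I, k i) (s.card - I.card)) := by
  rw [← sum_sum_powerset_erase_insert]
  refine sum_congr rfl fun i hi => sum_congr rfl fun J hJ => ?_
  have hiJ : i ∉ J := fun h => notMem_erase i s (mem_powerset.mp hJ h)
  rw [sum_insert hiJ, card_insert_of_notMem hiJ, card_erase_of_mem hi, Nat.add_sub_cancel,
    ← add_assoc, ← sub_sub (y - c), sub_sub y c, Nat.sub_sub, Nat.add_comm 1]

lemma sum_vandermondeSum_erase_add_one [DecidableEq α] (s : Finset α) (k : α → ℤ) (y c : ℤ) :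
    ∑ i ∈ s, vandermondeSum (s.erase i) k y (c + 1)
      = ∑ I ∈ s.powerset, (s.card - I.card) • (fall (c + ∑ i ∈ I, k i + 1) I.card
          * fall (y - c - ∑ i ∈ I, k i - 1) (s.card - I.card - 1)) := by
  rw [← sum_sum_powerset_erase]
  refine sum_congr rfl fun i hi => sum_congr rfl fun J _ => ?_
  rw [card_erase_of_mem hi, Nat.sub_right_comm, add_right_comm, sub_add_eq_sub_sub,
    sub_right_comm _ 1]

lemma vandermondeSum_add_one_sub [DecidableEq α] (s : Finset α) (k : α → ℤ) (y c : ℤ) :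
    vandermondeSum s k y (c + 1) - vandermondeSum s k y c
      = ∑ i ∈ s, (vandermondeSum (s.erase i) k y (c + k i)
          - vandermondeSum (s.erase i) k y (c + 1)) := by
  rw [sum_sub_distrib, sum_vandermondeSum_erase_add_weight, sum_vandermondeSum_erase_add_one,
    vandermondeSum, vandermondeSum, ← sum_sub_distrib, ← sum_sub_distrib]
  refine sum_congr rfl fun I _ => ?_
  set x := c + ∑ i ∈ I, k i
  set z := y - c - ∑ i ∈ I, k i - 1
  rw [show c + 1 + ∑ i ∈ I, k i = x + 1 by ring, show y - (c + 1) - ∑ i ∈ I, k i = z by ring,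
    show y - c - ∑ i ∈ I, k i = z + 1 by ring, nsmul_eq_mul, nsmul_eq_mul]
  linear_combination fall (z + 1) (s.card - I.card) * fall_add_one_sub x I.card
    - fall (x + 1) I.card * fall_add_one_sub z (s.card - I.card)

lemma vandermondeSum_periodic [DecidableEq α] (s : Finset α) (k : α → ℤ) (y : ℤ) :
    Function.Periodic (vandermondeSum s k y) 1 := by
  induction s using Finset.strongInduction with
  | H s ih =>
    intro c
    rw [← sub_eq_zero, vandermondeSum_add_one_sub]
    refine sum_eq_zero fun i hi => sub_eq_zero.mpr ?_
    exact eq_of_periodic_one (ih _ (erase_ssubset hi)) _ _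

/-- The left-hand side of the identity; its term for `I = ∅` is `K^{[n]}`, as `0 - 1 = 0` in `ℕ`. -/
def abelSum (s : Finset α) (k : α → ℤ) (K : ℤ) : ℤ :=
  ∑ I ∈ s.powerset, fall (∑ i ∈ I, k i) (I.card - 1) * fall (K - ∑ i ∈ I, k i) (s.card - I.card)

lemma abelSum_congr {s : Finset α} {k k' : α → ℤ} (h : ∀ i ∈ s, k i = k' i) (K : ℤ) :
    abelSum s k K = abelSum s k' K :=
  sum_congr rfl fun I hI => by
    rw [sum_congr rfl fun i hi => h i (mem_powerset.mp hI hi)]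

lemma abelSum_eq_add_vandermondeSum [DecidableEq α] {s : Finset α} {j : α} (hj : j ∈ s)
    (k : α → ℤ) (K : ℤ) :
    abelSum s k K = ∑ J ∈ (s.erase j).powerset,
        fall (∑ i ∈ J, k i) (J.card - 1) * fall (K - ∑ i ∈ J, k i) (s.card - J.card)
      + vandermondeSum (s.erase j) k K (k j) := by
  rw [abelSum, ← insert_erase hj, sum_powerset_insert (notMem_erase j s), insert_erase hj]
  congr 1
  refine sum_congr rfl fun J hJ => ?_
  have hjJ : j ∉ J := fun h => notMem_erase j s (mem_powerset.mp hJ h)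
  rw [sum_insert hjJ, card_insert_of_notMem hjJ, card_erase_of_mem hj, Nat.add_sub_cancel,
    sub_add_eq_sub_sub, Nat.sub_sub, Nat.add_comm 1]

lemma abelSum_update_zero [DecidableEq α] (s : Finset α) (k : α → ℤ) (j : α) (K : ℤ) :
    abelSum s (Function.update k j 0) K = abelSum s k K := by
  by_cases hj : j ∈ s
  · have hk : ∀ i ∈ s.erase j, Function.update k j 0 i = k i :=
      fun i hi => Function.update_of_ne (ne_of_mem_erase hi) 0 k
    rw [abelSum_eq_add_vandermondeSum hj, abelSum_eq_add_vandermondeSum hj,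
      vandermondeSum_congr hk, Function.update_self,
      eq_of_periodic_one (vandermondeSum_periodic _ k K) 0 (k j)]
    congr 1
    refine sum_congr rfl fun J hJ => ?_
    rw [sum_congr rfl fun i hi => hk i (mem_powerset.mp hJ hi)]
  · exact abelSum_congr (fun i hi => Function.update_of_ne (ne_of_mem_of_not_mem hi hj) 0 k) K

lemma abelSum_eq_abelSum_zero (s : Finset α) (k : α → ℤ) (K : ℤ) :
    abelSum s k K = abelSum s 0 K := by
  classical
  have h : ∀ u : Finset α, abelSum s (u.piecewise 0 k) K = abelSum s k K := by
    intro u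
    induction u using Finset.induction_on with
    | empty => rw [piecewise_empty]
    | insert a u _ ih => rw [piecewise_insert, Pi.zero_apply, abelSum_update_zero, ih]
  rw [← h s]
  exact abelSum_congr (fun i hi => piecewise_eq_of_mem _ _ _ hi) K

lemma abelSum_zero (s : Finset α) (K : ℤ) : abelSum s 0 K = fall (K + 1) s.card := by
  have hsum : abelSum s 0 K
      = ∑ j ∈ range (s.card + 1), s.card.choose j • (fall 0 (j - 1) * fall K (s.card - j)) := by
    rw [abelSum, sum_powerset]
    refine sum_congr rfl fun j _ => ?_
    simp only [Pi.zero_apply, sum_const_zero, sub_zero]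
    rw [sum_congr rfl fun I hI => by rw [(mem_powersetCard.mp hI).2], sum_const, card_powersetCard]
  rw [hsum]
  rcases s.card with _ | n
  · simp [fall_zero]
  · -- only `j = 0, 1` survive, since `0^{[j-1]} = 0` for `j ≥ 2`
    rw [sum_range_succ', sum_range_succ']
    have hΔ := fall_add_one_sub K (n + 1)
    rw [Nat.add_sub_cancel, Nat.cast_succ] at hΔ
    simp only [add_tsub_cancel_right, fall_zero_left_succ, Nat.reduceSubDiff, zero_mul, nsmul_zero,
      sum_const_zero, zero_add, Nat.choose_one_right, tsub_self, fall_zero, one_mul,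
      Nat.choose_zero_right, zero_tsub, tsub_zero, one_smul]
    linear_combination -hΔ

theorem abelSum_eq (s : Finset α) (k : α → ℤ) (K : ℤ) : abelSum s k K = fall (K + 1) s.card := by
  rw [abelSum_eq_abelSum_zero, abelSum_zero]

/-- Base case `k₁ = 0` of Lemma A.2; the index set `M = {2,…,m+1}` is modelled
by `Fin m`, and the identity is polynomial in `K`, so `K` is an arbitrary integer. -/
theorem lemma_A2_base (m : ℕ) (k : Fin m → ℕ) (K : ℤ) :
    fall K m
      + ∑ I ∈ (Finset.univ : Finset (Fin m)).powerset.filter (fun I => I.Nonempty),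
          fall (∑ i ∈ I, (k i : ℤ)) (I.card - 1)
            * fall (K - ∑ i ∈ I, (k i : ℤ)) (m - I.card)
      = fall (K + 1) m := by
  have hnonempty : (univ : Finset (Fin m)).powerset.filter (fun I => I.Nonempty)
      = univ.powerset.erase ∅ := by
    ext I
    simp [nonempty_iff_ne_empty]
  have h := abelSum_eq univ (fun i => (k i : ℤ)) K
  rw [abelSum, ← add_sum_erase _ _ (empty_mem_powerset univ), card_univ, Fintype.card_fin] at h
  simp only [sum_empty, card_empty, Nat.zero_sub, fall_zero, sub_zero, one_mul] at h
  rwa [hnonempty]
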